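/- arXiv:2104.12268 — 3 statements merged into one kernel-verified Lean document; each statement's English description precedes it below -/
import Mathlib

section
/- Let n ≥ 2, let G_1,…,G_n be vertex-disjoint finite simple graphs with chosen vertices u_i ∈ V(G_i), and let G be their vertex-gluing at u_1,…,u_n. Let m ≥ 1, let (L_i,H_i) be an m-fold cover of G_i for each i, and let f_i : L_1(u_1) → L_i(u_i) be a bijection for each i ∈ {2,…,n}. Then P_DP(G,m) ≤ Σ_{x ∈ L_1(u_1)} [ N(x,(L_1,H_1)) · ∏_{i=2}^{n} N(f_i(x),(L_i,H_i)) ]. -/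
open SimpleGraph Finset

/-- A (standardized) `m`-fold cover of a graph `G`: the vertex set of the cover graph `H`
is `V × Fin m`, where the fiber (list) of a vertex `v` is `L v = {v} × Fin m`.
Every `m`-fold cover in the sense of Dvořák–Postle is isomorphic to one of this form. -/
structure DPCover {V : Type} (G : SimpleGraph V) (m : ℕ) where
  /-- the cover graph -/
  H : SimpleGraph (V × Fin m)
  /-- each fiber induces a complete graph -/
  fiber_complete : ∀ (v : V) (i j : Fin m), i ≠ j → H.Adj (v, i) (v, j)
  /-- cross-edges only join fibers of adjacent vertices -/
  cross : ∀ (u v : V) (i j : Fin m), H.Adj (u, i) (v, j) → u = v ∨ G.Adj u v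
  /-- the cross-edges between the fibers of two adjacent vertices form a matching -/
  matching : ∀ (u v : V), G.Adj u v → ∀ (i j j' : Fin m),
      H.Adj (u, i) (v, j) → H.Adj (u, i) (v, j') → j = j'

/-- `f` encodes an `(L,H)`-coloring of `G`, i.e. the set `{(v, f v) : v ∈ V}` is independent
in the cover graph. -/
def DPCover.IsColoring {V : Type} {G : SimpleGraph V} {m : ℕ} (C : DPCover G m)
    (f : V → Fin m) : Prop :=
  ∀ u v : V, ¬ C.H.Adj (u, f u) (v, f v)

/-- `P_DP(G, (L,H))`: the number of `(L,H)`-colorings of `G`. -/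
noncomputable def DPCover.count {V : Type} [Fintype V] {G : SimpleGraph V} {m : ℕ}
    (C : DPCover G m) : ℕ :=
  Nat.card { f : V → Fin m // C.IsColoring f }

/-- `N((v,j), (L,H))`: the number of `(L,H)`-colorings of `G` containing the vertex `(v, j)`. -/
noncomputable def DPCover.countAt {V : Type} [Fintype V] {G : SimpleGraph V} {m : ℕ}
    (C : DPCover G m) (v : V) (j : Fin m) : ℕ :=
  Nat.card { f : V → Fin m // C.IsColoring f ∧ f v = j }

/-- The DP color function `P_DP(G, m)`. -/
noncomputable def PDP {V : Type} [Fintype V] (G : SimpleGraph V) (m : ℕ) : ℕ :=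
  sInf { n : ℕ | ∃ C : DPCover G m, n = C.count }

/-- The chromatic polynomial `P(G, m)`: the number of proper colorings with colors in `Fin m`. -/
noncomputable def chromPoly {V : Type} [Fintype V] (G : SimpleGraph V) (m : ℕ) : ℕ :=
  Nat.card { f : V → Fin m // ∀ u v : V, G.Adj u v → f u ≠ f v }

/-- The DP color function threshold `τ_DP(G)`: the least `N ≥ χ(G)` such that
`P_DP(G,m) = P(G,m)` for all `m ≥ N` (and `∞` if there is no such `N`). -/
noncomputable def tauDP {V : Type} [Fintype V] (G : SimpleGraph V) : ℕ∞ :=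
  sInf { N : ℕ∞ | ∃ n : ℕ, N = (n : ℕ∞) ∧ G.chromaticNumber ≤ (n : ℕ∞) ∧
      ∀ m : ℕ, n ≤ m → PDP G m = chromPoly G m }

/-- The join `G ∨ K` of two vertex-disjoint graphs. -/
def joinG {α β : Type} (G : SimpleGraph α) (K : SimpleGraph β) : SimpleGraph (α ⊕ β) where
  Adj x y := match x, y with
    | Sum.inl a, Sum.inl a' => G.Adj a a'
    | Sum.inr b, Sum.inr b' => K.Adj b b'
    | Sum.inl _, Sum.inr _ => True
    | Sum.inr _, Sum.inl _ => True
  symm := by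
    constructor
    rintro (a | b) (a' | b') h
    · exact h.symm
    · trivial
    · trivial
    · exact h.symm
  loopless := by
    constructor
    rintro (a | b) h
    · exact G.loopless.irrefl a h
    · exact K.loopless.irrefl b h

/-- The vertex-gluing of graphs `G i` at the vertices `u i`: identify all the `u i` into a
single vertex (represented by `none`). -/
def VGlue {n : ℕ} {V : Fin n → Type} (G : ∀ i, SimpleGraph (V i)) (u : ∀ i, V i) :
    SimpleGraph (Option (Σ i : Fin n, {x : V i // x ≠ u i})) where
  Adj a b := match a, b with
    | none, none => False
    | none, some ⟨i, x⟩ => (G i).Adj (u i) x.val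
    | some ⟨i, x⟩, none => (G i).Adj x.val (u i)
    | some ⟨i, x⟩, some ⟨j, y⟩ => ∃ h : i = j, (G j).Adj (cast (congrArg V h) x.val) y.val
  symm := by
    constructor
    rintro (_ | ⟨i, x⟩) (_ | ⟨j, y⟩) h
    · exact h.elim
    · exact h.symm
    · exact h.symm
    · obtain ⟨rfl, h⟩ := h
      exact ⟨rfl, h.symm⟩
  loopless := by
    constructor
    rintro (_ | ⟨i, x⟩) h
    · exact h
    · obtain ⟨h', h⟩ := h
      exact (G i).loopless.irrefl x.val h

/-- The `K_p`-gluing of graphs `G i`, each with a chosen `p`-clique `U i 0, …, U i (p-1)`: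
the cliques are identified coordinatewise (the glued clique is `Sum.inl (Fin p)`). -/
def KGlue {n p : ℕ} {V : Fin n → Type} (G : ∀ i, SimpleGraph (V i))
    (U : ∀ i, Fin p → V i) :
    SimpleGraph ((Fin p) ⊕ (Σ i : Fin n, {x : V i // ∀ q, x ≠ U i q})) where
  Adj a b := match a, b with
    | Sum.inl q, Sum.inl q' => q ≠ q'
    | Sum.inl q, Sum.inr ⟨i, x⟩ => (G i).Adj (U i q) x.val
    | Sum.inr ⟨i, x⟩, Sum.inl q => (G i).Adj x.val (U i q)
    | Sum.inr ⟨i, x⟩, Sum.inr ⟨j, y⟩ => ∃ h : i = j, (G j).Adj (cast (congrArg V h) x.val) y.val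
  symm := by
    constructor
    rintro (q | ⟨i, x⟩) (q' | ⟨j, y⟩) h
    · exact h.symm
    · exact h.symm
    · exact h.symm
    · obtain ⟨rfl, h⟩ := h
      exact ⟨rfl, h.symm⟩
  loopless := by
    constructor
    rintro (q | ⟨i, x⟩) h
    · exact h rfl
    · obtain ⟨h', h⟩ := h
      exact (G i).loopless.irrefl x.val h

/-- The disjoint union of a family of graphs. -/
def sigmaG {n : ℕ} {V : Fin n → Type} (G : ∀ i, SimpleGraph (V i)) :
    SimpleGraph (Σ i : Fin n, V i) where
  Adj a b := ∃ h : a.1 = b.1, (G b.1).Adj (cast (congrArg V h) a.2) b.2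
  symm := by
    constructor
    rintro ⟨i, x⟩ ⟨j, y⟩ ⟨h1, h2⟩
    dsimp only at h1 h2 ⊢
    subst h1
    exact ⟨rfl, h2.symm⟩
  loopless := by
    constructor
    rintro ⟨i, x⟩ ⟨h1, h2⟩
    dsimp only at h2
    exact (G i).loopless.irrefl x h2

/-- chordal: every cycle of length at least `4` has a chord, i.e. an edge of the graph
joining two vertices of the cycle that is not an edge of the cycle. -/
def IsChordal {V : Type} (G : SimpleGraph V) : Prop :=
  ∀ (v : V) (w : G.Walk v v), w.IsCycle → 4 ≤ w.length →
    ∃ x y, x ∈ w.support ∧ y ∈ w.support ∧ G.Adj x y ∧ s(x, y) ∉ w.edges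

/-!
Glue the given covers along the fibres of the `u i`: the fibre of the glued vertex is `Fin m`,
and its colour `j` is identified with the colour `σ i j` of `u i` in the `i`-th cover. This is an
`m`-fold cover of the vertex-gluing, and since every cross-edge lives inside a single piece,
a colouring of it is exactly a colour `j` of the glued vertex together with, for every `i`, a
colouring of the `i`-th cover that uses `σ i j` at `u i`. Counting these gives the right-hand
side, which therefore bounds the minimum `P_DP`.
-/

theorem PDP_le_count {V : Type} [Fintype V] {G : SimpleGraph V} {m : ℕ} (C : DPCover G m) :
    PDP G m ≤ C.count :=
  Nat.sInf_le ⟨C, rfl⟩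

section VGlue

variable {n : ℕ} {V : Fin n → Type} {G : ∀ i, SimpleGraph (V i)} (u : ∀ i, V i) {m : ℕ}
  (C : ∀ i, DPCover (G i) m) (σ : ∀ _ : Fin n, Fin m ≃ Fin m)

/-- The vertex `none` of the gluing is the glued vertex, so its colour `j` stands for `σ i j`
in the fibre of `u i`. -/
def vglueCoverAdj : Option (Σ i, {x : V i // x ≠ u i}) × Fin m →
    Option (Σ i, {x : V i // x ≠ u i}) × Fin m → Prop
  | (none, j), (none, k) => j ≠ k
  | (none, j), (some ⟨i, y⟩, k) => (C i).H.Adj (u i, σ i j) (y.val, k)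
  | (some ⟨i, x⟩, j), (none, k) => (C i).H.Adj (x.val, j) (u i, σ i k)
  | (some ⟨i, x⟩, j), (some ⟨i', y⟩, k) =>
      ∃ h : i = i', (C i').H.Adj (cast (congrArg V h) x.val, j) (y.val, k)

def vglueCover : DPCover (VGlue G u) m where
  H :=
    { Adj := vglueCoverAdj u C σ
      symm := by
        constructor
        rintro ⟨_ | ⟨i, x⟩, j⟩ ⟨_ | ⟨i', y⟩, k⟩ h
        · exact h.symm
        · exact h.symm
        · exact h.symm
        · obtain ⟨rfl, h⟩ := h
          exact ⟨rfl, h.symm⟩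
      loopless := by
        constructor
        rintro ⟨_ | ⟨i, x⟩, j⟩ h
        · exact h rfl
        · exact (C i).H.loopless.irrefl _ h.2 }
  fiber_complete := by
    rintro (_ | ⟨i, x⟩) j k hjk
    · exact hjk
    · exact ⟨rfl, (C i).fiber_complete x.val j k hjk⟩
  cross := by
    rintro (_ | ⟨i, x⟩) (_ | ⟨i', y⟩) j k h
    · exact .inl rfl
    · exact .inr (((C i').cross _ _ _ _ h).resolve_left fun h' => y.2 h'.symm)
    · exact .inr (((C i).cross _ _ _ _ h).resolve_left x.2)
    · obtain ⟨rfl, h⟩ := h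
      exact ((C i).cross _ _ _ _ h).imp (fun h' => by rw [Subtype.ext h']) fun h' => ⟨rfl, h'⟩
  matching := by
    rintro (_ | ⟨i, x⟩) (_ | ⟨i', y⟩) hadj j k k' h₁ h₂
    · exact hadj.elim
    · exact (C i').matching _ _ hadj _ _ _ h₁ h₂
    · exact (σ i).injective ((C i).matching _ _ hadj _ _ _ h₁ h₂)
    · obtain ⟨rfl, h₁⟩ := h₁
      exact (C i).matching _ _ hadj.2 _ _ _ h₁ h₂.2

def vglueRestrict [∀ i, DecidableEq (V i)] (f : Option (Σ i, {x : V i // x ≠ u i}) → Fin m)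
    (i : Fin n) (x : V i) : Fin m :=
  if h : x = u i then σ i (f none) else f (some ⟨i, x, h⟩)

def vglueExtend (j : Fin m) (g : ∀ i, V i → Fin m) : Option (Σ i, {x : V i // x ≠ u i}) → Fin m
  | none => j
  | some ⟨i, x⟩ => g i x.val

variable {u C σ}

theorem vglueRestrict_self [∀ i, DecidableEq (V i)]
    (f : Option (Σ i, {x : V i // x ≠ u i}) → Fin m) (i : Fin n) :
    vglueRestrict u σ f i (u i) = σ i (f none) :=
  dif_pos rfl

theorem vglueRestrict_of_ne [∀ i, DecidableEq (V i)]
    (f : Option (Σ i, {x : V i // x ≠ u i}) → Fin m) {i : Fin n} {x : V i} (hx : x ≠ u i) :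
    vglueRestrict u σ f i x = f (some ⟨i, x, hx⟩) :=
  dif_neg hx

theorem isColoring_vglueRestrict [∀ i, DecidableEq (V i)]
    {f : Option (Σ i, {x : V i // x ≠ u i}) → Fin m} (hf : (vglueCover u C σ).IsColoring f)
    (i : Fin n) : (C i).IsColoring (vglueRestrict u σ f i) := by
  intro a b
  by_cases ha : a = u i <;> by_cases hb : b = u i
  · subst ha hb
    exact (C i).H.loopless.irrefl _
  · subst ha
    rw [vglueRestrict_self, vglueRestrict_of_ne f hb]
    exact hf none (some ⟨i, b, hb⟩)
  · subst hb
    rw [vglueRestrict_self, vglueRestrict_of_ne f ha]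
    exact hf (some ⟨i, a, ha⟩) none
  · rw [vglueRestrict_of_ne f ha, vglueRestrict_of_ne f hb]
    exact fun hadj => hf (some ⟨i, a, ha⟩) (some ⟨i, b, hb⟩) ⟨rfl, hadj⟩

theorem isColoring_vglueExtend {j : Fin m} {g : ∀ i, V i → Fin m}
    (hg : ∀ i, (C i).IsColoring (g i) ∧ g i (u i) = σ i j) :
    (vglueCover u C σ).IsColoring (vglueExtend u j g) := by
  rintro (_ | ⟨i, x⟩) (_ | ⟨i', y⟩)
  · exact fun h => h rfl
  · have := (hg i').1 (u i') y.val
    rwa [(hg i').2] at this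
  · have := (hg i).1 x.val (u i)
    rwa [(hg i).2] at this
  · rintro ⟨rfl, hadj⟩
    exact (hg i).1 x.val y.val hadj

variable (u C σ) [∀ i, DecidableEq (V i)]

def vglueColoringEquiv :
    {f // (vglueCover u C σ).IsColoring f} ≃
      Σ j : Fin m, ∀ i, {g : V i → Fin m // (C i).IsColoring g ∧ g (u i) = σ i j} where
  toFun f := ⟨f.1 none, fun i => ⟨vglueRestrict u σ f.1 i, isColoring_vglueRestrict f.2 i,
    vglueRestrict_self f.1 i⟩⟩
  invFun p := ⟨vglueExtend u p.1 fun i => (p.2 i).1, isColoring_vglueExtend fun i => (p.2 i).2⟩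
  left_inv := by
    rintro ⟨f, _⟩
    refine Subtype.ext (funext ?_)
    rintro (_ | ⟨i, x⟩)
    · rfl
    · exact vglueRestrict_of_ne f x.2
  right_inv := by
    rintro ⟨j, g⟩
    refine congrArg (Sigma.mk j) (funext fun i => Subtype.ext (funext fun x => ?_))
    by_cases hx : x = u i
    · subst hx
      exact (vglueRestrict_self _ i).trans (g i).2.2.symm
    · exact vglueRestrict_of_ne _ hx

theorem vglueCover_count [∀ i, Fintype (V i)] :
    (vglueCover u C σ).count = ∑ j : Fin m, ∏ i : Fin n, (C i).countAt (u i) (σ i j) := by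
  rw [DPCover.count, Nat.card_congr (vglueColoringEquiv u C σ), Nat.card_sigma]
  simp only [Nat.card_pi, DPCover.countAt]

end VGlue

theorem stmt_10 {n : ℕ} {V : Fin n → Type}
    [∀ i, Fintype (V i)] [∀ i, DecidableEq (V i)]
    (G : ∀ i, SimpleGraph (V i)) (u : ∀ i, V i) (m : ℕ)
    (C : ∀ i, DPCover (G i) m) (σ : ∀ _ : Fin n, Fin m ≃ Fin m) :
    PDP (VGlue G u) m ≤ ∑ j : Fin m, ∏ i : Fin n, (C i).countAt (u i) (σ i j) :=
  vglueCover_count u C σ ▸ PDP_le_count (vglueCover u C σ)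
end

section
/- Let l ≥ 3, let G = C_l, let m ≥ 2, and let (L,H) be any m-fold cover of G. Then for every vertex v of G and every r ∈ L(v), the number of (L,H)-colorings of G containing r satisfies m · N(r,(L,H)) ≥ P_DP(G,m). -/
open SimpleGraph Finset

/-! Extending each partial matching of `C` between consecutive fibers to a permutation yields a
cover with fewer colorings, given by permutations `τ x` on the edges `x (x + 1)`. Relabelling the
fibers moves all these permutations onto the single edge `(v - 1) v`, and once the color at `v`
is fixed to `r`, only the preimage `g⁻¹ r` under the permutation `g` on that edge matters.
Relabelling all colors at once then shows that the count depends only on whether `g` fixes `r`.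
So the cover carrying on that edge the identity or a fixed-point-free permutation, according to
whether `g` fixes `r`, has that same number of colorings through each of its `m` colors at `v`. -/

open Equiv Fin.CommRing Fin.NatCast

namespace DPCover

variable {V : Type} [Fintype V] {G : SimpleGraph V} {m : ℕ}

theorem count_eq_sum_countAt (C : DPCover G m) (v : V) : C.count = ∑ j, C.countAt v j := by
  classical
  simp only [count, countAt, Nat.card_eq_fintype_card, Fintype.card_subtype]
  rw [card_eq_sum_card_fiberwise (f := fun f => f v) (t := univ) fun _ _ => mem_univ _]
  simp only [filter_filter]

theorem countAt_mono {C C' : DPCover G m} (h : ∀ f, C.IsColoring f → C'.IsColoring f)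
    (v : V) (j : Fin m) : C.countAt v j ≤ C'.countAt v j :=
  Nat.card_mono (Set.toFinite _) fun f hf => ⟨h f hf.1, hf.2⟩

end DPCover

theorem Equiv.Perm.exists_apply_eq_and_apply_eq {α : Type*} {a b a' b' : α}
    (h : a = b ↔ a' = b') : ∃ ρ : Perm α, ρ a = a' ∧ ρ b = b' := by
  classical
  by_cases hab : a = b
  · subst hab
    exact ⟨swap a a', swap_apply_left a a', by rw [swap_apply_left, h.1 rfl]⟩
  · have inj {x y : α} (hxy : x ≠ y) : Function.Injective ![x, y] := fun i j => by
      fin_cases i <;> fin_cases j <;> simp [hxy, hxy.symm]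
    obtain ⟨ρ, hρ⟩ := Perm.exists_extending_pair _ _ (inj hab) (inj (mt h.2 hab))
    exact ⟨ρ, hρ 0, hρ 1⟩

theorem Fin.exists_perm_apply_eq_self_iff {m : ℕ} (hm : 2 ≤ m) (p : Prop) :
    ∃ h : Perm (Fin m), ∀ a, h a = a ↔ p := by
  by_cases hp : p
  · exact ⟨1, by simp [hp]⟩
  · obtain ⟨k, rfl⟩ : ∃ k, m = k + 2 := ⟨m - 2, by omega⟩
    exact ⟨finRotate _, by simp [hp]⟩

section Cycle

variable {n m : ℕ}

theorem Fin.self_ne_add_one_add_one (x : Fin (n + 3)) : x ≠ x + 1 + 1 := by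
  rw [add_assoc, one_add_one_eq_two, Ne, left_eq_add]
  exact two_ne_zero

def cyclePermCover (τ : Fin (n + 3) → Perm (Fin m)) : DPCover (cycleGraph (n + 3)) m where
  H := SimpleGraph.fromRel fun p q => p.1 = q.1 ∨ (q.1 = p.1 + 1 ∧ q.2 = τ p.1 p.2)
  fiber_complete _ _ _ hij := ⟨by simpa using hij, Or.inl (Or.inl rfl)⟩
  cross := by
    rintro u w i j ⟨-, (h | ⟨h, -⟩) | (h | ⟨h, -⟩)⟩ <;> dsimp only at h
    · exact Or.inl h
    · exact Or.inr (cycleGraph_adj.2 (Or.inr (by rw [h]; ring)))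
    · exact Or.inl h.symm
    · exact Or.inr (cycleGraph_adj.2 (Or.inl (by rw [h]; ring)))
  matching := by
    rintro u w huw i j j' ⟨-, h⟩ ⟨-, h'⟩
    have hne := huw.ne
    dsimp only at h h'
    rcases h with (h | ⟨h, hj⟩) | (h | ⟨h, hj⟩) <;>
      rcases h' with (h' | ⟨h', hj'⟩) | (h' | ⟨h', hj'⟩) <;>
      first
      | exact (hne h).elim | exact (hne h.symm).elim
      | exact (hne h').elim | exact (hne h'.symm).elim
      | exact hj.trans hj'.symm
      | exact (τ w).injective (hj.symm.trans hj')
      | exact (Fin.self_ne_add_one_add_one u (by rw [← h, ← h'])).elim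
      | exact (Fin.self_ne_add_one_add_one w (by rw [← h, ← h'])).elim

theorem DPCover.isColoring_iff_of_cycleGraph (C : DPCover (cycleGraph (n + 3)) m)
    (f : Fin (n + 3) → Fin m) :
    C.IsColoring f ↔ ∀ x, ¬ C.H.Adj (x, f x) (x + 1, f (x + 1)) := by
  refine ⟨fun hf x => hf x (x + 1), fun hf u w hadj => ?_⟩
  rcases C.cross u w _ _ hadj with rfl | huw
  · exact C.H.loopless.irrefl _ hadj
  · rcases cycleGraph_adj.1 huw with h | h
    · obtain rfl : u = w + 1 := by rw [← h]; ring
      exact hf w hadj.symm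
    · obtain rfl : w = u + 1 := by rw [← h]; ring
      exact hf u hadj

theorem cyclePermCover_isColoring_iff (τ : Fin (n + 3) → Perm (Fin m))
    (f : Fin (n + 3) → Fin m) :
    (cyclePermCover τ).IsColoring f ↔ ∀ x, f (x + 1) ≠ τ x (f x) := by
  simp [DPCover.isColoring_iff_of_cycleGraph, cyclePermCover, Fin.self_ne_add_one_add_one]

theorem DPCover.exists_cyclePermCover_isColoring_imp (C : DPCover (cycleGraph (n + 3)) m) :
    ∃ σ : Fin (n + 3) → Perm (Fin m),
      ∀ f, (cyclePermCover σ).IsColoring f → C.IsColoring f := by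
  have hadj (x : Fin (n + 3)) : (cycleGraph (n + 3)).Adj x (x + 1) :=
    cycleGraph_adj.2 (Or.inr (by ring))
  have (x : Fin (n + 3)) : ∃ σ : Perm (Fin m), ∀ i j, C.H.Adj (x, i) (x + 1, j) → σ i = j := by
    let M := {p : Fin m × Fin m // C.H.Adj (x, p.1) (x + 1, p.2)}
    have hfst : Function.Injective fun p : M => p.1.1 := by
      rintro ⟨⟨i, j⟩, hij⟩ ⟨⟨i', j'⟩, hij'⟩ (rfl : i = i')
      obtain rfl := C.matching _ _ (hadj x) _ _ _ hij hij'
      rfl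
    have hsnd : Function.Injective fun p : M => p.1.2 := by
      rintro ⟨⟨i, j⟩, hij⟩ ⟨⟨i', j'⟩, hij'⟩ (rfl : j = j')
      obtain rfl := C.matching _ _ (hadj x).symm _ _ _ hij.symm hij'.symm
      rfl
    obtain ⟨σ, hσ⟩ := Perm.exists_extending_pair _ _ hfst hsnd
    exact ⟨σ, fun i j hij => hσ ⟨(i, j), hij⟩⟩
  choose σ hσ using this
  refine ⟨σ, fun f hf => (C.isColoring_iff_of_cycleGraph f).2 fun x hx => ?_⟩
  exact (cyclePermCover_isColoring_iff σ f).1 hf x (hσ x _ _ hx).symm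

theorem countAt_cyclePermCover_gauge (τ ρ : Fin (n + 3) → Perm (Fin m)) (v : Fin (n + 3))
    (r : Fin m) :
    (cyclePermCover fun x => ρ (x + 1) * τ x * (ρ x)⁻¹).countAt v (ρ v r) =
      (cyclePermCover τ).countAt v r := by
  refine Nat.card_congr (Equiv.subtypeEquiv (Equiv.piCongrRight ρ) fun f => ?_).symm
  simp [cyclePermCover_isColoring_iff]

def cycleTransport (τ : Fin (n + 3) → Perm (Fin m)) (v : Fin (n + 3)) : ℕ → Perm (Fin m)
  | 0 => 1
  | k + 1 => τ (v + k) * cycleTransport τ v k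

theorem exists_cycleTransport (τ : Fin (n + 3) → Perm (Fin m)) (v : Fin (n + 3)) :
    ∃ π : Fin (n + 3) → Perm (Fin m), π v = 1 ∧ ∀ x, x + 1 ≠ v → π (x + 1) = τ x * π x := by
  refine ⟨fun x => cycleTransport τ v (x - v).val, by simp [cycleTransport], fun x hx => ?_⟩
  have hlast : x - v ≠ Fin.last _ := fun h =>
    hx (by rw [← sub_eq_zero, show x + 1 - v = x - v + 1 by ring, h, Fin.last_add_one])
  simp only [show x + 1 - v = x - v + 1 by ring, Fin.val_add_one, if_neg hlast, cycleTransport,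
    Fin.cast_val_eq_self, add_sub_cancel]

theorem exists_countAt_cyclePermCover_eq_mulSingle (τ : Fin (n + 3) → Perm (Fin m))
    (v : Fin (n + 3)) (r : Fin m) :
    ∃ g, (cyclePermCover τ).countAt v r =
      (cyclePermCover (Pi.mulSingle (v - 1) g)).countAt v r := by
  obtain ⟨π, hv, hπ⟩ := exists_cycleTransport τ v
  refine ⟨τ (v - 1) * π (v - 1), ?_⟩
  have gauge := countAt_cyclePermCover_gauge τ (fun x => (π x)⁻¹) v r
  rw [hv, inv_one, Perm.one_apply] at gauge
  rw [← gauge]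
  congr
  funext x
  by_cases hx : x = v - 1
  · subst hx
    simp [hv]
  · rw [Pi.mulSingle_eq_of_ne hx, hπ x (by rintro rfl; simp at hx)]
    group

theorem countAt_cyclePermCover_mulSingle_congr {g h : Perm (Fin m)} {a : Fin m}
    (hgh : g⁻¹ a = h⁻¹ a) (v : Fin (n + 3)) :
    (cyclePermCover (Pi.mulSingle (v - 1) g)).countAt v a =
      (cyclePermCover (Pi.mulSingle (v - 1) h)).countAt v a := by
  suffices ∀ {g h : Perm (Fin m)}, g⁻¹ a = h⁻¹ a → ∀ f,
      (cyclePermCover (Pi.mulSingle (v - 1) g)).IsColoring f → f v = a →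
      (cyclePermCover (Pi.mulSingle (v - 1) h)).IsColoring f from
    Nat.card_congr (Equiv.subtypeEquivRight fun f =>
      ⟨fun hf => ⟨this hgh f hf.1 hf.2, hf.2⟩, fun hf => ⟨this hgh.symm f hf.1 hf.2, hf.2⟩⟩)
  intro g h hgh f hf hfv
  rw [cyclePermCover_isColoring_iff] at hf ⊢
  intro x
  by_cases hx : x = v - 1
  · subst hx
    have hedge := hf (v - 1)
    simp only [sub_add_cancel, Pi.mulSingle_eq_same, hfv] at hedge ⊢
    rwa [Ne, ← Perm.inv_eq_iff_eq, ← hgh, Perm.inv_eq_iff_eq]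
  · simpa [Pi.mulSingle_eq_of_ne hx] using hf x

theorem countAt_cyclePermCover_mulSingle_conj (ρ g : Perm (Fin m)) (i v : Fin (n + 3))
    (a : Fin m) :
    (cyclePermCover (Pi.mulSingle i (ρ * g * ρ⁻¹))).countAt v (ρ a) =
      (cyclePermCover (Pi.mulSingle i g)).countAt v a := by
  rw [← countAt_cyclePermCover_gauge (Pi.mulSingle i g) fun _ => ρ]
  congr
  funext x
  by_cases hx : x = i
  · subst hx
    simp
  · simp [hx]

theorem countAt_cyclePermCover_mulSingle_eq {g h : Perm (Fin m)} {r a : Fin m}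
    (hfix : h a = a ↔ g r = r) (v : Fin (n + 3)) :
    (cyclePermCover (Pi.mulSingle (v - 1) h)).countAt v a =
      (cyclePermCover (Pi.mulSingle (v - 1) g)).countAt v r := by
  obtain ⟨ρ, hρr, hρg⟩ := Perm.exists_apply_eq_and_apply_eq (a := r) (b := g⁻¹ r) (a' := a)
    (b' := h⁻¹ a) (by rw [Perm.eq_inv_iff_eq, Perm.eq_inv_iff_eq, hfix])
  calc (cyclePermCover (Pi.mulSingle (v - 1) h)).countAt v a
      = (cyclePermCover (Pi.mulSingle (v - 1) (ρ * g * ρ⁻¹))).countAt v (ρ r) := by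
        rw [hρr]
        exact countAt_cyclePermCover_mulSingle_congr (by rw [← hρg, ← hρr]; simp) v
    _ = (cyclePermCover (Pi.mulSingle (v - 1) g)).countAt v r :=
        countAt_cyclePermCover_mulSingle_conj ρ g _ v r

end Cycle

theorem stmt_13 (l : ℕ) (hl : 3 ≤ l) (m : ℕ) (hm : 2 ≤ m)
    (C : DPCover (cycleGraph l) m) (v : Fin l) (r : Fin m) :
    PDP (cycleGraph l) m ≤ m * C.countAt v r := by
  obtain ⟨n, rfl⟩ : ∃ n, l = n + 3 := ⟨l - 3, by omega⟩
  obtain ⟨σ, hσ⟩ := C.exists_cyclePermCover_isColoring_imp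
  obtain ⟨g, hg⟩ := exists_countAt_cyclePermCover_eq_mulSingle σ v r
  obtain ⟨h, hh⟩ := Fin.exists_perm_apply_eq_self_iff hm (g r = r)
  calc PDP (cycleGraph (n + 3)) m
      ≤ (cyclePermCover (Pi.mulSingle (v - 1) h)).count := Nat.sInf_le ⟨_, rfl⟩
    _ = ∑ a, (cyclePermCover (Pi.mulSingle (v - 1) h)).countAt v a :=
      DPCover.count_eq_sum_countAt _ v
    _ = m * (cyclePermCover σ).countAt v r := by
      simp [countAt_cyclePermCover_mulSingle_eq (hh _), hg]
    _ ≤ m * C.countAt v r := Nat.mul_le_mul_left m (DPCover.countAt_mono hσ v r)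
end

section
/- Let G be a finite chordal graph, let m ≥ χ(G), and let (L,H) be any m-fold cover of G. Then for every vertex u of G and every r ∈ L(u), the number of (L,H)-colorings of G containing r satisfies m · N(r,(L,H)) ≥ P_DP(G,m). -/
open SimpleGraph Finset

/-! A chordal graph with at least two vertices has a simplicial vertex `s ≠ u` (Dirac). Since the
neighbours of `s` form a clique, every proper colouring of `G - s` extends to at most
`m - deg s` proper colourings of `G`; in an `m`-fold cover, on the other hand, each neighbour
of `s` blocks at most one vertex of `L(s)`, so every `(L,H)`-colouring of `G - s` extends in at
least `m - deg s` ways. Induction on `|V|` gives `P(G, m) ≤ m · N(r, (L,H))`, and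
`P_DP(G, m) ≤ P(G, m)` because the proper colourings are the colourings of the cover `G □ K_m`.
-/

namespace SimpleGraph

variable {V : Type} {G : SimpleGraph V}

namespace Walk

theorem exists_length_lt_of_isChord [DecidableEq V] :
    ∀ {x y : V} (p : G.Walk x y) {u v : V}, p.IsChord s(u, v) →
      ∃ q : G.Walk x y, q.length < p.length ∧ q.support ⊆ p.support
  | _, _, nil, u, v, h => by
    obtain ⟨huv, -, hu, hv⟩ := isChord_sym2Mk.mp h
    simp only [support_nil, List.mem_singleton] at hu hv
    exact absurd (hu.trans hv.symm) huv.ne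
  | x, y, @cons _ _ _ x' _ hxx' p', u, v, h => by
    obtain ⟨huv, hne, hu, hv⟩ := isChord_sym2Mk.mp h
    by_cases hp' : u ∈ p'.support ∧ v ∈ p'.support
    · obtain ⟨q, hlt, hsub⟩ := exists_length_lt_of_isChord p'
        (isChord_sym2Mk.mpr ⟨huv, fun he => hne (by simp [he]), hp'⟩)
      exact ⟨cons hxx' q, by simpa using hlt, List.cons_subset_cons _ hsub⟩
    -- Otherwise one end of the chord is `x`: jump from `x` straight to the other end.
    suffices key : ∀ w, G.Adj x w → w ∈ p'.support → s(x, w) ∉ (cons hxx' p').edges →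
        ∃ q : G.Walk x y, q.length < (cons hxx' p').length ∧
          q.support ⊆ (cons hxx' p').support by
      simp only [support_cons, List.mem_cons] at hu hv
      rcases hu with rfl | hu
      · exact key v huv (hv.resolve_left huv.ne.symm) hne
      rcases hv with rfl | hv
      · exact key u huv.symm hu (by rwa [Sym2.eq_swap])
      exact absurd ⟨hu, hv⟩ hp'
    intro w hxw hw hxw'
    have hwx' : w ≠ x' := by rintro rfl; simp at hxw'
    refine ⟨cons hxw (p'.dropUntil w hw), ?_, ?_⟩
    · simpa using length_dropUntil_lt_length hw hwx'
    · simpa using List.subset_cons_of_subset _ (p'.support_dropUntil_subset_support hw)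

theorem exists_isPath_isChordless_subset [DecidableEq V] {x y : V} (p : G.Walk x y) :
    ∃ q : G.Walk x y, q.IsPath ∧ q.IsChordless ∧ q.support ⊆ p.support := by
  induction hn : p.length using Nat.strong_induction_on generalizing p with
  | _ n ih =>
  by_cases hq : p.bypass.IsChordless
  · exact ⟨p.bypass, p.bypass_isPath, hq, p.support_bypass_subset_support⟩
  obtain ⟨e, he⟩ : ∃ e, p.bypass.IsChord e := by simpa [IsChordless] using hq
  induction e using Sym2.ind with
  | _ u v =>
  obtain ⟨r, hlt, hsub⟩ := p.bypass.exists_length_lt_of_isChord he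
  obtain ⟨q, hqp, hqc, hqr⟩ :=
    ih r.length (hn ▸ hlt.trans_le p.length_bypass_le_length) r rfl
  exact ⟨q, hqp, hqc, fun z hz => p.support_bypass_subset_support (hsub (hqr hz))⟩

theorem two_le_length_of_not_adj {x y : V} (p : G.Walk x y) (hne : x ≠ y)
    (hxy : ¬G.Adj x y) : 2 ≤ p.length := by
  by_contra! h
  interval_cases hp : p.length
  · exact hne (eq_of_length_eq_zero hp)
  · exact hxy (adj_of_length_eq_one hp)

theorem IsPath.isCycle_append_reverse {x y : V} {p q : G.Walk x y} (hp : p.IsPath)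
    (hq : q.IsPath) (hlen : 1 < p.length)
    (hpq : ∀ z ∈ p.support, z ∈ q.support → z = x ∨ z = y) :
    (p.append q.reverse).IsCycle := by
  refine hp.isCycle_append ((isPath_reverse_iff q).mpr hq) (fun z hzp hzq => ?_) (.inl hlen)
  have hp' := hp.support_nodup
  have hq' := ((isPath_reverse_iff q).mpr hq).support_nodup
  rw [← p.cons_tail_support] at hp'
  rw [← q.reverse.cons_tail_support] at hq'
  have hzq' : z ∈ q.support := by
    rw [← List.mem_reverse, ← support_reverse]
    exact List.mem_of_mem_tail hzq
  rcases hpq z (List.mem_of_mem_tail hzp) hzq' with rfl | rfl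
  exacts [(List.nodup_cons.mp hp').1 hzp, (List.nodup_cons.mp hq').1 hzq]

end Walk

def ReachableAvoiding (G : SimpleGraph V) (S : Set V) (x y : V) : Prop :=
  ∃ w : G.Walk x y, ∀ z ∈ w.support, z ∉ S

namespace ReachableAvoiding

variable {S : Set V} {x y z : V}

theorem refl (hx : x ∉ S) : G.ReachableAvoiding S x x := ⟨.nil, by simpa⟩

theorem symm (h : G.ReachableAvoiding S x y) : G.ReachableAvoiding S y x := by
  obtain ⟨w, hw⟩ := h
  exact ⟨w.reverse, by simpa using hw⟩

theorem trans (hxy : G.ReachableAvoiding S x y) (hyz : G.ReachableAvoiding S y z) :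
    G.ReachableAvoiding S x z := by
  obtain ⟨w₁, hw₁⟩ := hxy
  obtain ⟨w₂, hw₂⟩ := hyz
  refine ⟨w₁.append w₂, fun a ha => ?_⟩
  rcases (Walk.mem_support_append_iff _ _).mp ha with ha | ha
  exacts [hw₁ a ha, hw₂ a ha]

theorem of_adj (h : G.Adj x y) (hx : x ∉ S) (hy : y ∉ S) : G.ReachableAvoiding S x y :=
  ⟨h.toWalk, by simp [hx, hy]⟩

theorem notMem_right (h : G.ReachableAvoiding S x y) : y ∉ S := by
  obtain ⟨w, hw⟩ := h
  exact hw y w.end_mem_support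

theorem exists_walk_forall_reachableAvoiding (h : G.ReachableAvoiding S x y) :
    ∃ w : G.Walk x y, ∀ z ∈ w.support, G.ReachableAvoiding S x z := by
  classical
  obtain ⟨w, hw⟩ := h
  exact ⟨w, fun z hz =>
    ⟨w.takeUntil z hz, fun a ha => hw a (w.support_takeUntil_subset_support hz ha)⟩⟩

end ReachableAvoiding

theorem Walk.exists_adj_reachableAvoiding {S : Set V} :
    ∀ {a b : V} (w : G.Walk a b), a ∉ S → (∃ z ∈ w.support, z ∈ S) →
      ∃ x ∈ w.support, x ∈ S ∧ ∃ c, G.ReachableAvoiding S a c ∧ G.Adj c x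
  | _, _, .nil, ha, ⟨z, hz, hzS⟩ => by
    rw [Walk.mem_support_nil_iff] at hz
    exact absurd (hz ▸ hzS) ha
  | a, _, .cons (v := a') h w', ha, ⟨z, hz, hzS⟩ => by
    by_cases ha' : a' ∈ S
    · exact ⟨a', by simp, ha', a, .refl ha, h⟩
    have hz' : z ∈ w'.support := by
      rcases List.mem_cons.mp hz with rfl | hz
      exacts [absurd hzS ha, hz]
    obtain ⟨x, hx, hxS, c, hc, hcx⟩ := w'.exists_adj_reachableAvoiding ha' ⟨z, hz', hzS⟩
    exact ⟨x, by simp [hx], hxS, c, (ReachableAvoiding.of_adj h ha ha').trans hc, hcx⟩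

def Separates (G : SimpleGraph V) (S : Finset V) (a b : V) : Prop :=
  a ∉ S ∧ b ∉ S ∧ ¬G.ReachableAvoiding S a b

namespace Separates

variable {S : Finset V} {a b x y : V}

theorem symm (h : G.Separates S a b) : G.Separates S b a :=
  ⟨h.2.1, h.1, fun h' => h.2.2 h'.symm⟩

variable [DecidableEq V]

/-- A vertex of a minimum separator without such a neighbour could be dropped from it. -/
theorem exists_adj_of_min (hS : G.Separates S a b)
    (hmin : ∀ T, G.Separates T a b → #S ≤ #T) (hx : x ∈ S) :
    ∃ c, G.ReachableAvoiding S a c ∧ G.Adj c x := by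
  have hsmaller : ¬G.Separates (S.erase x) a b := fun h =>
    absurd (hmin _ h) (by simpa using Finset.card_erase_lt_of_mem hx)
  obtain ⟨w, hw⟩ : G.ReachableAvoiding (S.erase x) a b := by
    simpa [Separates, Finset.mem_erase, hS.1, hS.2.1] using hsmaller
  obtain ⟨x', hx'w, hx'S, c, hc, hcx'⟩ := w.exists_adj_reachableAvoiding hS.1 (by
    by_contra! hw'
    exact hS.2.2 ⟨w, fun z hz => hw' z hz⟩)
  obtain rfl : x' = x := by
    by_contra hne
    exact hw x' hx'w (by simpa [Finset.mem_erase, hne] using hx'S)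
  exact ⟨c, hc, hcx'⟩

theorem exists_isPath_isChordless_of_min (hS : G.Separates S a b)
    (hmin : ∀ T, G.Separates T a b → #S ≤ #T) (hx : x ∈ S) (hy : y ∈ S) :
    ∃ p : G.Walk x y, p.IsPath ∧ p.IsChordless ∧
      ∀ z ∈ p.support, z = x ∨ z = y ∨ G.ReachableAvoiding S a z := by
  obtain ⟨cx, hcx, hxc⟩ := hS.exists_adj_of_min hmin hx
  obtain ⟨cy, hcy, hyc⟩ := hS.exists_adj_of_min hmin hy
  obtain ⟨wx, hwx⟩ := hcx.exists_walk_forall_reachableAvoiding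
  obtain ⟨wy, hwy⟩ := hcy.exists_walk_forall_reachableAvoiding
  obtain ⟨p, hp, hpc, hsub⟩ :=
    (Walk.cons hxc.symm ((wx.reverse.append wy).concat hyc)).exists_isPath_isChordless_subset
  refine ⟨p, hp, hpc, fun z hz => ?_⟩
  have hz' := hsub hz
  simp only [Walk.support_cons, Walk.support_concat, List.mem_cons,
    List.mem_append, Walk.mem_support_append_iff, Walk.support_reverse, List.mem_reverse,
    List.not_mem_nil, or_false] at hz'
  rcases hz' with h | (h | h) | h
  exacts [.inl h, .inr (.inr (hwx z h)), .inr (.inr (hwy z h)), .inr (.inl h)]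

end Separates

theorem separates_compl_pair [DecidableEq V] [Fintype V] {a b : V} (hab : a ≠ b)
    (h : ¬G.Adj a b) : G.Separates {a, b}ᶜ a b := by
  refine ⟨by simp, by simp, ?_⟩
  rintro ⟨_ | @⟨_, c, _, hac, w⟩, hw⟩
  · exact hab rfl
  · have hc := hw c (by simp)
    simp only [Finset.coe_compl, Finset.coe_insert, Finset.coe_singleton, Set.mem_compl_iff,
      Set.mem_insert_iff, Set.mem_singleton_iff, not_or, not_and, not_not] at hc
    by_cases hca : c = a
    · exact G.loopless.irrefl a (hca ▸ hac)
    · exact h (hc hca ▸ hac)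

def IsSimplicial (G : SimpleGraph V) (v : V) : Prop :=
  G.IsClique (G.neighborSet v)

theorem isSimplicial_top (v : V) : (⊤ : SimpleGraph V).IsSimplicial v :=
  (isClique_univ.mpr rfl).subset (Set.subset_univ _)

theorem IsSimplicial.of_induce {W : Set V} {v : V} (hv : v ∈ W) (hN : G.neighborSet v ⊆ W)
    (h : (G.induce W).IsSimplicial ⟨v, hv⟩) : G.IsSimplicial v :=
  fun x hx y hy hxy => h (x := ⟨x, hN hx⟩) hx (y := ⟨y, hN hy⟩) hy (by simpa using hxy)

theorem exists_isSimplicial_of_induce {W S : Set V} {a : V} (haW : a ∈ W) (haS : a ∉ S)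
    (hS : G.IsClique S) (hN : ∀ v ∈ W, v ∉ S → G.neighborSet v ⊆ W)
    (hW : G.induce W = ⊤ ∨ ∃ s t : W, s ≠ t ∧ ¬(G.induce W).Adj s t ∧
      (G.induce W).IsSimplicial s ∧ (G.induce W).IsSimplicial t) :
    ∃ s ∈ W, s ∉ S ∧ G.IsSimplicial s := by
  rcases hW with hW | ⟨s, t, hst, hadj, hs, ht⟩
  · refine ⟨a, haW, haS, .of_induce haW (hN a haW haS) ?_⟩
    rw [hW]
    exact isSimplicial_top _
  by_cases hsS : s.1 ∈ S
  · by_cases htS : t.1 ∈ S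
    · exact absurd (hS hsS htS (Subtype.coe_ne_coe.mpr hst)) hadj
    · exact ⟨t, t.2, htS, .of_induce t.2 (hN t t.2 htS) ht⟩
  · exact ⟨s, s.2, hsS, .of_induce s.2 (hN s s.2 hsS) hs⟩

end SimpleGraph

namespace IsChordal

variable {V : Type} {G : SimpleGraph V}

theorem induce (hG : IsChordal G) (W : Set V) : IsChordal (G.induce W) := by
  intro v w hcyc hlen
  let f := Embedding.induce (G := G) W
  obtain ⟨x, y, hx, hy, hadj, hne⟩ := hG (f v) (w.map f.toHom)
    (hcyc.map Subtype.val_injective) (by rwa [Walk.length_map])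
  rw [Walk.support_map, List.mem_map] at hx hy
  obtain ⟨x, hx, rfl⟩ := hx
  obtain ⟨y, hy, rfl⟩ := hy
  refine ⟨x, y, hx, hy, f.map_adj_iff.mp hadj, fun hc => hne ?_⟩
  rw [Walk.edges_map]
  exact List.mem_map_of_mem hc

/-- Two chordless `x`–`y` paths through the two sides of a minimum separator would close up to
a chordless cycle of length at least four. -/
theorem isClique_of_separates_min [DecidableEq V] (hG : IsChordal G) {S : Finset V}
    {a b : V} (hS : G.Separates S a b) (hmin : ∀ T, G.Separates T a b → #S ≤ #T) :
    G.IsClique (S : Set V) := by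
  intro x hx y hy hne
  by_contra hxy
  obtain ⟨p, hp, hpc, hpA⟩ := hS.exists_isPath_isChordless_of_min hmin hx hy
  obtain ⟨q, hq, hqc, hqB⟩ :=
    hS.symm.exists_isPath_isChordless_of_min (fun T hT => hmin T hT.symm) hx hy
  have hAB : ∀ u v, G.ReachableAvoiding S a u → G.ReachableAvoiding S b v → ¬G.Adj u v :=
    fun u v hu hv huv => hS.2.2 <|
      hu.trans ((ReachableAvoiding.of_adj huv hu.notMem_right hv.notMem_right).trans hv.symm)
  have hpq : ∀ z ∈ p.support, z ∈ q.support → z = x ∨ z = y := fun z hzp hzq => by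
    rcases hpA z hzp with h | h | hA
    exacts [.inl h, .inr h, (hqB z hzq).imp_right fun h =>
      h.resolve_right fun hB => hS.2.2 (hA.trans hB.symm)]
  have hcross : ∀ u v, u ∈ p.support → v ∈ q.support → G.Adj u v →
      s(u, v) ∈ p.edges ∨ s(u, v) ∈ q.edges := by
    intro u v hu hv huv
    by_cases hvp : v ∈ p.support
    · exact .inl (hpc.mem_edges hu hvp huv)
    by_cases huq : u ∈ q.support
    · exact .inr (hqc.mem_edges huq hv huv)
    refine absurd huv (hAB u v ?_ ?_)
    · rcases hpA u hu with rfl | rfl | h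
      exacts [absurd q.start_mem_support huq, absurd q.end_mem_support huq, h]
    · rcases hqB v hv with rfl | rfl | h
      exacts [absurd p.start_mem_support hvp, absurd p.end_mem_support hvp, h]
  have hp2 := p.two_le_length_of_not_adj hne hxy
  have hq2 := q.two_le_length_of_not_adj hne hxy
  obtain ⟨u, v, hu, hv, huv, hchord⟩ := hG x (p.append q.reverse)
    (hp.isCycle_append_reverse hq hp2 hpq) (by rw [Walk.length_append, Walk.length_reverse]; omega)
  simp only [Walk.mem_support_append_iff, Walk.support_reverse, List.mem_reverse] at hu hv
  simp only [Walk.edges_append, Walk.edges_reverse, List.mem_append, List.mem_reverse] at hchord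
  rcases hu with hu | hu <;> rcases hv with hv | hv
  · exact hchord (.inl (hpc.mem_edges hu hv huv))
  · exact hchord (hcross u v hu hv huv)
  · rw [Sym2.eq_swap] at hchord
    exact hchord (hcross v u hv hu huv.symm)
  · exact hchord (.inr (hqc.mem_edges hu hv huv))

/-- Dirac's lemma. Each side of a minimum separator `S` of two non-adjacent vertices induces,
together with the clique `S`, a smaller chordal graph; a simplicial vertex of it outside `S` is
simplicial in `G`. -/
theorem eq_top_or_exists_isSimplicial [Fintype V] (hG : IsChordal G) :
    G = ⊤ ∨ ∃ s t, s ≠ t ∧ ¬G.Adj s t ∧ G.IsSimplicial s ∧ G.IsSimplicial t := by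
  classical
  induction hn : Fintype.card V using Nat.strong_induction_on generalizing V with
  | _ n ih =>
  by_cases htop : G = ⊤
  · exact .inl htop
  obtain ⟨a, b, hab, hnab⟩ : ∃ a b, a ≠ b ∧ ¬G.Adj a b := by
    by_contra! h
    exact htop (eq_top_iff.mpr fun a b hab => h a b hab)
  obtain ⟨S, hS, hmin⟩ :
      ∃ S, G.Separates S a b ∧ ∀ T, G.Separates T a b → #S ≤ #T := by
    obtain ⟨S, hS, hmin⟩ := (univ.filter (G.Separates · a b)).exists_min_image card
      ⟨_, mem_filter.mpr ⟨mem_univ _, separates_compl_pair hab hnab⟩⟩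
    exact ⟨S, (mem_filter.mp hS).2, fun T hT => hmin T (mem_filter.mpr ⟨mem_univ _, hT⟩)⟩
  have hclique := hG.isClique_of_separates_min hS hmin
  have side : ∀ {a b}, G.Separates S a b →
      ∃ s, G.ReachableAvoiding S a s ∧ G.IsSimplicial s := by
    intro a b hS
    let W : Set V := {z | G.ReachableAvoiding S a z} ∪ S
    have hbW : b ∉ W := by
      rintro (h | h)
      exacts [hS.2.2 h, hS.2.1 h]
    have hN : ∀ v ∈ W, v ∉ (S : Set V) → G.neighborSet v ⊆ W := by
      rintro v (hv | hv) hvS z hz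
      · by_cases hzS : z ∈ (S : Set V)
        · exact .inr hzS
        · exact .inl (hv.trans (.of_adj hz hvS hzS))
      · exact absurd hv hvS
    obtain ⟨s, hsW, hsS, hs⟩ := exists_isSimplicial_of_induce (.inl (.refl hS.1)) hS.1
      hclique hN (ih _ (hn ▸ Fintype.card_subtype_lt hbW) (hG.induce W) rfl)
    exact ⟨s, hsW.resolve_right hsS, hs⟩
  obtain ⟨s, hs, hsimp⟩ := side hS
  obtain ⟨t, ht, htsimp⟩ := side hS.symm
  refine .inr ⟨s, t, ?_, fun hst => ?_, hsimp, htsimp⟩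
  · rintro rfl
    exact hS.2.2 (hs.trans ht.symm)
  · exact hS.2.2 <|
      hs.trans ((ReachableAvoiding.of_adj hst hs.notMem_right ht.notMem_right).trans ht.symm)

theorem exists_isSimplicial_ne [Fintype V] (hG : IsChordal G) (hV : 1 < Fintype.card V)
    (u : V) : ∃ s, s ≠ u ∧ G.IsSimplicial s := by
  rcases hG.eq_top_or_exists_isSimplicial with rfl | ⟨s, t, hst, -, hs, ht⟩
  · obtain ⟨s, hs⟩ := Fintype.exists_ne_of_one_lt_card hV u
    exact ⟨s, hs, isSimplicial_top s⟩
  · by_cases hsu : s = u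
    · exact ⟨t, hsu ▸ hst.symm, ht⟩
    · exact ⟨s, hsu, hs⟩

end IsChordal

section Colorings

variable {V : Type} {G : SimpleGraph V} {m : ℕ}

def DPCover.induce (C : DPCover G m) (W : Set V) : DPCover (G.induce W) m where
  H := C.H.comap (Prod.map Subtype.val id)
  fiber_complete v := C.fiber_complete v
  cross u v i j h := (C.cross u v i j h).imp Subtype.ext id
  matching u v huv := C.matching u v huv

open Classical in
theorem DPCover.sub_degree_le_card_free [Fintype V] [DecidableRel G.Adj] (C : DPCover G m)
    (s : V) (g : {x // x ≠ s} → Fin m) :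
    m - G.degree s ≤ #{c | ∀ v, ¬C.H.Adj (s, c) (v.1, g v)} := by
  let blocked (v : V) : Finset (Fin m) := {c | ∃ h : v ≠ s, C.H.Adj (s, c) (v, g ⟨v, h⟩)}
  have hblocked : ∀ v, #(blocked v) ≤ 1 := by
    intro v
    refine card_le_one.mpr fun c hc c' hc' => ?_
    obtain ⟨h, hc⟩ := (mem_filter.mp hc).2
    obtain ⟨_, hc'⟩ := (mem_filter.mp hc').2
    have hsv := (C.cross _ _ _ _ hc).resolve_left h.symm
    exact C.matching v s hsv.symm _ _ _ (C.H.adj_symm hc) (C.H.adj_symm hc')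
  have hcover : ({c | ∀ v, ¬C.H.Adj (s, c) (v.1, g v)} : Finset (Fin m))ᶜ ⊆
      (G.neighborFinset s).biUnion blocked := by
    intro c hc
    simp only [mem_compl, mem_filter, mem_univ, true_and, not_forall, not_not] at hc
    obtain ⟨v, hv⟩ := hc
    have hsv := (C.cross _ _ _ _ hv).resolve_left v.2.symm
    exact mem_biUnion.mpr ⟨v, by simpa using hsv, mem_filter.mpr ⟨mem_univ _, v.2, hv⟩⟩
  have := (card_le_card hcover).trans <|
    card_biUnion_le.trans (sum_le_card_nsmul _ _ 1 fun v _ => hblocked v)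
  rw [card_compl, Fintype.card_fin, card_neighborFinset_eq_degree, smul_eq_mul, mul_one] at this
  omega

theorem DPCover.mul_countAt_induce_le_countAt [Fintype V] [DecidableEq V] [DecidableRel G.Adj]
    (C : DPCover G m) {s u : V} (hu : u ≠ s) (r : Fin m) :
    (m - G.degree s) * (C.induce {x | x ≠ s}).countAt ⟨u, hu⟩ r ≤ C.countAt u r := by
  classical
  simp only [DPCover.countAt, Nat.card_eq_fintype_card, Fintype.card_subtype]
  refine mul_card_image_le_card_of_maps_to (f := fun f (x : {x | x ≠ s}) => f x)
    (fun f hf => ?_) _ (fun g hg => ?_)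
  · simp only [mem_filter, mem_univ, true_and] at hf ⊢
    exact ⟨fun p q => hf.1 p q, hf.2⟩
  simp only [mem_filter, mem_univ, true_and] at hg
  let extend (c : Fin m) : V → Fin m := (Equiv.funSplitAt s (Fin m)).symm (c, g)
  have hext : ∀ c, ∀ x (hx : x ≠ s), extend c x = g ⟨x, hx⟩ := by
    intro c x hx; simp [extend, hx]
  refine (C.sub_degree_le_card_free s g).trans ?_
  rw [← card_image_of_injective _ (f := extend) fun c c' h => by
    simpa [extend] using congrFun h s]
  refine card_le_card fun f hf => ?_
  obtain ⟨c, hc, rfl⟩ := mem_image.mp hf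
  simp only [mem_filter, mem_univ, true_and] at hc ⊢
  refine ⟨⟨fun p q => ?_, by rw [hext c u hu]; exact hg.2⟩, funext fun x => hext c x x.2⟩
  by_cases hp : p = s <;> by_cases hq : q = s
  · subst hp hq; exact C.H.loopless.irrefl _
  · subst hp; simpa [extend, hq] using hc ⟨q, hq⟩
  · subst hq; simpa [extend, hp] using fun h => hc ⟨p, hp⟩ (C.H.adj_symm h)
  · rw [hext c p hp, hext c q hq]; exact hg.1 ⟨p, hp⟩ ⟨q, hq⟩

theorem DPCover.countAt_pos [Fintype V] [Subsingleton V] (C : DPCover G m) (u : V) (r : Fin m) :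
    0 < C.countAt u r :=
  have : Nonempty {f // C.IsColoring f ∧ f u = r} :=
    ⟨⟨fun _ => r, fun p q => Subsingleton.elim p q ▸ C.H.loopless.irrefl _, rfl⟩⟩
  Nat.card_pos

def DPCover.canonical (G : SimpleGraph V) (m : ℕ) : DPCover G m where
  H := G □ ⊤
  fiber_complete _ _ _ h := boxProd_adj.mpr (.inr ⟨h, rfl⟩)
  cross _ _ _ _ h := by
    rcases boxProd_adj.mp h with ⟨h, -⟩ | ⟨-, h⟩
    exacts [.inr h, .inl h]
  matching _ _ huv _ _ _ h h' := by
    simp only [boxProd_adj, huv.ne, and_false, or_false] at h h'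
    exact h.2.symm.trans h'.2

theorem DPCover.count_canonical [Fintype V] (G : SimpleGraph V) (m : ℕ) :
    (DPCover.canonical G m).count = chromPoly G m :=
  Nat.card_congr <| Equiv.subtypeEquivRight fun f => by
    simp only [DPCover.IsColoring, DPCover.canonical, boxProd_adj, top_adj]
    exact ⟨fun h u v huv hf => h u v (.inl ⟨huv, hf⟩),
      fun h u v => by rintro (⟨huv, hf⟩ | ⟨hf, rfl⟩); exacts [h u v huv hf, hf rfl]⟩

theorem PDP_le_chromPoly [Fintype V] (G : SimpleGraph V) (m : ℕ) : PDP G m ≤ chromPoly G m :=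
  DPCover.count_canonical G m ▸ Nat.sInf_le ⟨_, rfl⟩

theorem chromPoly_le_pow [Fintype V] (G : SimpleGraph V) (m : ℕ) :
    chromPoly G m ≤ m ^ Fintype.card V := by
  calc chromPoly G m ≤ Nat.card (V → Fin m) :=
        Nat.card_le_card_of_injective _ Subtype.val_injective
    _ = m ^ Fintype.card V := by simp [Nat.card_fun]

theorem chromPoly_le_mul_chromPoly_induce [Fintype V] [DecidableEq V] [DecidableRel G.Adj]
    {s : V} (hs : G.IsSimplicial s) (m : ℕ) :
    chromPoly G m ≤ (m - G.degree s) * chromPoly (G.induce {x | x ≠ s}) m := by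
  classical
  simp only [chromPoly, Nat.card_eq_fintype_card, Fintype.card_subtype]
  refine (card_le_mul_card_image _ _ (f := fun f (x : {x | x ≠ s}) => f x) fun g hg => ?_).trans
    (Nat.mul_le_mul_left _ (card_le_card fun g hg => ?_))
  · obtain ⟨f₀, hf₀, rfl⟩ := mem_image.mp hg
    simp only [mem_filter, mem_univ, true_and] at hf₀
    have hinj : Set.InjOn f₀ (G.neighborFinset s) := fun v hv w hw hvw => by
      by_contra hne
      exact hf₀ v w (hs (by simpa using hv) (by simpa using hw) hne) hvw
    have hcard : #((G.neighborFinset s).image f₀)ᶜ = m - G.degree s := by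
      rw [card_compl, card_image_of_injOn hinj, Fintype.card_fin, card_neighborFinset_eq_degree]
    rw [← hcard]
    refine card_le_card_of_injOn (· s) (fun f hf => ?_) fun f hf f' hf' h => ?_
    · simp only [mem_coe, mem_filter, mem_univ, true_and] at hf
      simp only [coe_compl, coe_image, Set.mem_compl_iff, Set.mem_image, not_exists,
        not_and, mem_coe, mem_neighborFinset]
      intro v hv hfv
      exact hf.1 s v hv (hfv.symm.trans (congrFun hf.2 ⟨v, hv.ne'⟩).symm)
    · simp only [mem_coe, mem_filter, mem_univ, true_and] at hf hf'
      funext x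
      by_cases hx : x = s
      · exact hx ▸ h
      · exact (congrFun hf.2 ⟨x, hx⟩).trans (congrFun hf'.2 ⟨x, hx⟩).symm
  · obtain ⟨f, hf, rfl⟩ := mem_image.mp hg
    simp only [mem_filter, mem_univ, true_and] at hf ⊢
    exact fun u v h => hf u v h

theorem IsChordal.chromPoly_le_mul_countAt [Fintype V] (hG : IsChordal G) (C : DPCover G m)
    (u : V) (r : Fin m) : chromPoly G m ≤ m * C.countAt u r := by
  classical
  induction hn : Fintype.card V using Nat.strong_induction_on generalizing V with
  | _ n ih =>
  rcases le_or_gt (Fintype.card V) 1 with h1 | h1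
  · have : Subsingleton V := Fintype.card_le_one_iff_subsingleton.mp h1
    have hcard : Fintype.card V = 1 := h1.antisymm (Fintype.card_pos_iff.mpr ⟨u⟩)
    calc chromPoly G m ≤ m * 1 := by simpa [hcard] using chromPoly_le_pow G m
      _ ≤ m * C.countAt u r := Nat.mul_le_mul_left m (C.countAt_pos u r)
  obtain ⟨s, hsu, hs⟩ := hG.exists_isSimplicial_ne h1 u
  let C' := C.induce {x | x ≠ s}
  have hC' : chromPoly (G.induce {x | x ≠ s}) m ≤ m * C'.countAt ⟨u, hsu.symm⟩ r :=
    ih _ (hn ▸ Fintype.card_subtype_lt (p := (· ≠ s)) (not_not.mpr rfl)) (hG.induce _) C' _ rfl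
  calc chromPoly G m ≤ (m - G.degree s) * chromPoly (G.induce {x | x ≠ s}) m :=
        chromPoly_le_mul_chromPoly_induce hs m
    _ ≤ m * ((m - G.degree s) * C'.countAt ⟨u, hsu.symm⟩ r) := by
        rw [mul_left_comm]; exact Nat.mul_le_mul_left _ hC'
    _ ≤ m * C.countAt u r := Nat.mul_le_mul_left m (C.mul_countAt_induce_le_countAt hsu.symm r)

end Colorings

theorem stmt_14_general {V : Type} [Fintype V] (G : SimpleGraph V) (hG : IsChordal G)
    (m : ℕ) (C : DPCover G m) (u : V) (r : Fin m) :
    PDP G m ≤ m * C.countAt u r :=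
  (PDP_le_chromPoly G m).trans (hG.chromPoly_le_mul_countAt C u r)

theorem stmt_14 {V : Type} [Fintype V] (G : SimpleGraph V) (hG : IsChordal G)
    (m : ℕ) (hm : G.chromaticNumber ≤ (m : ℕ∞))
    (C : DPCover G m) (u : V) (r : Fin m) :
    PDP G m ≤ m * C.countAt u r :=
  stmt_14_general G hG m C u r
end
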